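/- arXiv:2303.04701 — 2 statements merged into one kernel-verified Lean document; each statement's English description precedes it below -/
import Mathlib

section
/- In the discrete series representation of sl(2,R) with lowest weight Δ > 0, defined on an orthonormal basis {|n⟩ : n ∈ ℤ≥0} by L0|n⟩ = (Δ+n)|n⟩, L−|n⟩ = √((n+2Δ)(n+1))|n+1⟩, L+|n⟩ = √((2Δ+n−1)n)|n−1⟩, the operator H + B = L0 + (L+ + L−)/2 is a non-negative symmetric operator (i.e., ⟨ψ|(H+B)|ψ⟩ ≥ 0 for all finite linear combinations ψ of basis vectors). -/
open Complex

/-- In the lowest-weight discrete series representation of `sl(2,ℝ)` with lowest weight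
`Δ > 0`, realized on finitely-supported sequences `ψ : ℕ →₀ ℂ` (finite linear
combinations of the orthonormal basis vectors `|n⟩`) by
`L0|n⟩ = (Δ+n)|n⟩`, `L₋|n⟩ = √((n+2Δ)(n+1))|n+1⟩`, `L₊|n⟩ = √((2Δ+n-1)n)|n-1⟩`,
the expectation value of `H + B = L0 + (L₊ + L₋)/2` is nonnegative:
`⟨ψ|(H+B)|ψ⟩ = Σ_n (Δ+n)|ψ n|² + Σ_n √((n+2Δ)(n+1)) Re(ψ(n+1)* ψ n) ≥ 0`. -/
theorem stmt2 (Δ : ℝ) (hΔ : 0 < Δ) (ψ : ℕ →₀ ℂ) :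
    0 ≤ (∑' n : ℕ, (Δ + n) * ‖ψ n‖ ^ 2)
        + ∑' n : ℕ, Real.sqrt ((n + 2 * Δ) * (n + 1)) *
            ((starRingEnd ℂ) (ψ (n + 1)) * ψ n).re := by
  obtain ⟨N, hN⟩ := ψ.support.exists_nat_subset_range
  have hz : ∀ n, N ≤ n → ψ n = 0 := by
    intro n hn
    by_contra h
    have := hN (Finsupp.mem_support_iff.2 h)
    simp only [Finset.mem_range] at this
    omega
  set s : ℕ → ℝ := fun n => Complex.normSq (ψ n) with hs
  have hsN : s N = 0 := by simp [hs, hz N le_rfl]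
  -- reduce tsums to finite sums
  have h1 : (∑' n : ℕ, (Δ + n) * ‖ψ n‖ ^ 2)
      = ∑ n ∈ Finset.range N, (Δ + n) * ‖ψ n‖ ^ 2 := by
    apply tsum_eq_sum
    intro n hn
    rw [hz n (by simpa using hn)]
    simp
  have h2 : (∑' n : ℕ, Real.sqrt ((n + 2 * Δ) * (n + 1)) *
            ((starRingEnd ℂ) (ψ (n + 1)) * ψ n).re)
      = ∑ n ∈ Finset.range N, Real.sqrt ((n + 2 * Δ) * (n + 1)) *
            ((starRingEnd ℂ) (ψ (n + 1)) * ψ n).re := by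
    apply tsum_eq_sum
    intro n hn
    rw [hz n (by simpa using hn)]
    simp
  rw [h1, h2, ← Finset.sum_add_distrib]
  -- per-term expansion of the square
  have hnorm : ∀ n : ℕ, ‖ψ n‖ ^ 2 = s n := by
    intro n; simp [hs, Complex.normSq_eq_norm_sq]
  have expand : ∀ n : ℕ,
      Complex.normSq ((Real.sqrt (n + 2 * Δ) : ℂ) * ψ n
          + (Real.sqrt (n + 1) : ℂ) * ψ (n + 1))
      = (n + 2 * Δ) * s n + (n + 1) * s (n + 1)
        + 2 * (Real.sqrt ((n + 2 * Δ) * (n + 1)) *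
            ((starRingEnd ℂ) (ψ (n + 1)) * ψ n).re) := by
    intro n
    have hA : (0:ℝ) ≤ (n : ℝ) + 2 * Δ := by positivity
    have hB : (0:ℝ) ≤ (n : ℝ) + 1 := by positivity
    have hnc : Complex.normSq (ψ n * (starRingEnd ℂ) (ψ (n + 1))) =
        Complex.normSq (ψ n * (starRingEnd ℂ) (ψ (n + 1))) := rfl
    rw [Complex.normSq_add]
    have e1 : Complex.normSq ((Real.sqrt (n + 2 * Δ) : ℂ) * ψ n)
        = (n + 2 * Δ) * s n := by
      rw [Complex.normSq_mul, Complex.normSq_ofReal, Real.mul_self_sqrt hA]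
    have e2 : Complex.normSq ((Real.sqrt (n + 1) : ℂ) * ψ (n + 1))
        = (n + 1) * s (n + 1) := by
      rw [Complex.normSq_mul, Complex.normSq_ofReal, Real.mul_self_sqrt hB]
    have e3 : ((Real.sqrt (n + 2 * Δ) : ℂ) * ψ n *
          (starRingEnd ℂ) ((Real.sqrt (n + 1) : ℂ) * ψ (n + 1))).re
        = Real.sqrt ((n + 2 * Δ) * (n + 1)) *
            ((starRingEnd ℂ) (ψ (n + 1)) * ψ n).re := by
      rw [map_mul, Complex.conj_ofReal, Real.sqrt_mul hA]
      have : (Real.sqrt (n + 2 * Δ) : ℂ) * ψ n *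
          ((Real.sqrt (n + 1) : ℂ) * (starRingEnd ℂ) (ψ (n + 1)))
          = ((Real.sqrt (n + 2 * Δ) * Real.sqrt (n + 1) : ℝ) : ℂ) *
            ((starRingEnd ℂ) (ψ (n + 1)) * ψ n) := by
        push_cast; ring
      rw [this, Complex.re_ofReal_mul]
    rw [e1, e2, e3]
  -- shift identity
  have shift : ∑ n ∈ Finset.range N, ((n : ℝ) + 1) * s (n + 1)
      = ∑ n ∈ Finset.range N, (n : ℝ) * s n := by
    have h := Finset.sum_range_succ' (fun n => (n : ℝ) * s n) N
    have h' := Finset.sum_range_succ (fun n => (n : ℝ) * s n) N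
    push_cast at h ⊢
    rw [h'] at h
    simp [hsN] at h
    linarith [h]
  -- main identity: expectation = (1/2) * sum of squares
  have key : ∑ n ∈ Finset.range N, ((Δ + n) * ‖ψ n‖ ^ 2
        + Real.sqrt ((n + 2 * Δ) * (n + 1)) *
            ((starRingEnd ℂ) (ψ (n + 1)) * ψ n).re)
      = (1/2) * ∑ n ∈ Finset.range N,
          Complex.normSq ((Real.sqrt (n + 2 * Δ) : ℂ) * ψ n
            + (Real.sqrt (n + 1) : ℂ) * ψ (n + 1)) := by
    rw [Finset.mul_sum]
    rw [← sub_eq_zero, ← Finset.sum_sub_distrib]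
    have : ∀ n ∈ Finset.range N, ((Δ + n) * ‖ψ n‖ ^ 2
        + Real.sqrt ((n + 2 * Δ) * (n + 1)) *
            ((starRingEnd ℂ) (ψ (n + 1)) * ψ n).re)
        - (1/2) * Complex.normSq ((Real.sqrt (n + 2 * Δ) : ℂ) * ψ n
            + (Real.sqrt (n + 1) : ℂ) * ψ (n + 1))
        = ((n : ℝ) * s n - ((n : ℝ) + 1) * s (n + 1)) / 2 := by
      intro n _
      rw [expand n, hnorm n]
      ring
    rw [Finset.sum_congr rfl this, ← Finset.sum_div, Finset.sum_sub_distrib, shift]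
    ring
  rw [key]
  have : 0 ≤ ∑ n ∈ Finset.range N,
      Complex.normSq ((Real.sqrt (n + 2 * Δ) : ℂ) * ψ n
        + (Real.sqrt (n + 1) : ℂ) * ψ (n + 1)) :=
    Finset.sum_nonneg fun n _ => Complex.normSq_nonneg _
  linarith
end

section
/- For β > 0, ∫_0^∞ ds · (s/π²) sinh(2πs) · cos(bs) · e^{−s²β} is, as a function of the real parameter b, not everywhere nonnegative; in particular there exist b > 0 and β > 0 for which the integral is strictly negative. -/
open MeasureTheory Real

open Complex in

noncomputable def gq (β : ℝ) (a : ℂ) : ℝ → ℂ := fun x ↦ Complex.exp (-(β:ℂ) * x ^ 2 + a * x)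

lemma gq_integrable {β : ℝ} (hβ : 0 < β) (a : ℂ) : Integrable (gq β a) := by
  have h : (-(β:ℂ)).re < 0 := by simpa using hβ
  have := integrable_cexp_quadratic' h a 0
  unfold gq; simp only [neg_mul]
  simpa using this

lemma norm_gq {β : ℝ} (a : ℂ) (x : ℝ) : ‖gq β a x‖ = Real.exp (-β * x ^ 2 + a.re * x) := by
  rw [gq, Complex.norm_exp]
  congr 1
  simp [Complex.add_re, Complex.mul_re, ← Complex.ofReal_pow]

lemma xgq_integrable {β : ℝ} (hβ : 0 < β) (a : ℂ) :
    Integrable (fun x : ℝ ↦ (x : ℂ) * gq β a x) := by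
  have hmaj : Integrable (fun x : ℝ ↦
      Real.exp (a.re ^ 2 / (2 * β)) * ‖x * Real.exp (-(β/2) * x ^ 2)‖) :=
    ((integrable_mul_exp_neg_mul_sq (half_pos hβ)).norm).const_mul _
  refine hmaj.mono' ?_ ?_
  · apply Continuous.aestronglyMeasurable
    exact Complex.continuous_ofReal.mul (Complex.continuous_exp.comp (by fun_prop))
  · filter_upwards with x
    rw [norm_mul, norm_gq]
    have h1 : Real.exp (-β * x ^ 2 + a.re * x)
        ≤ Real.exp (a.re ^ 2 / (2 * β)) * Real.exp (-(β/2) * x ^ 2) := by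
      rw [← Real.exp_add]
      apply Real.exp_le_exp.2
      rw [← sub_nonneg]
      have heq : a.re ^ 2 / (2 * β) + -(β/2) * x ^ 2 - (-β * x ^ 2 + a.re * x)
          = (a.re - β * x)^2 / (2 * β) := by field_simp; ring
      rw [heq]; positivity
    calc ‖(x:ℂ)‖ * Real.exp (-β * x ^ 2 + a.re * x)
        ≤ ‖(x:ℂ)‖ * (Real.exp (a.re ^ 2 / (2 * β)) * Real.exp (-(β/2) * x ^ 2)) :=
          mul_le_mul_of_nonneg_left h1 (norm_nonneg _)
      _ = Real.exp (a.re ^ 2 / (2 * β)) * ‖x * Real.exp (-(β/2) * x ^ 2)‖ := by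
          rw [Real.norm_eq_abs, abs_mul, _root_.abs_of_nonneg (Real.exp_pos _).le,
            Complex.norm_real, Real.norm_eq_abs]
          ring

lemma gq_hasDerivAt {β : ℝ} (a : ℂ) (x : ℝ) :
    HasDerivAt (gq β a) ((-2*(β:ℂ)*x + a) * gq β a x) x := by
  have hC : ∀ z : ℂ, HasDerivAt (fun z : ℂ ↦ Complex.exp (-(β:ℂ) * z ^ 2 + a * z))
      ((-2*(β:ℂ)*z + a) * Complex.exp (-(β:ℂ) * z ^ 2 + a * z)) z := by
    intro z
    have h1 : HasDerivAt (fun z : ℂ ↦ -(β:ℂ) * z ^ 2 + a * z) (-2*(β:ℂ)*z + a) z := by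
      have := ((hasDerivAt_pow 2 z).const_mul (-(β:ℂ))).add ((hasDerivAt_id z).const_mul a)
      refine this.congr_deriv ?_
      simp; ring
    have := h1.cexp
    refine this.congr_deriv ?_
    ring
  exact (hC x).comp_ofReal

lemma gq_integral {β : ℝ} (hβ : 0 < β) (a : ℂ) :
    ∫ x : ℝ, gq β a x = (π / β : ℂ) ^ (1/2 : ℂ) * Complex.exp (a^2 / (4*β)) := by
  have hβ' : (β:ℂ) ≠ 0 := by exact_mod_cast hβ.ne'
  have h : (-(β:ℂ)).re < 0 := by simpa using hβ
  have h2 := integral_cexp_quadratic h a 0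
  simp only [neg_neg, zero_sub, add_zero] at h2
  rw [show (∫ x : ℝ, gq β a x) = ∫ x : ℝ, Complex.exp (-(β:ℂ) * x ^ 2 + a * x) from rfl]
  simp only [neg_mul] at h2 ⊢
  rw [h2]
  congr 2
  ring

lemma xgq_integral {β : ℝ} (hβ : 0 < β) (a : ℂ) :
    ∫ x : ℝ, (x:ℂ) * gq β a x
      = a / (2*β) * ((π / β : ℂ) ^ (1/2:ℂ) * Complex.exp (a^2/(4*β))) := by
  have hβ' : (β:ℂ) ≠ 0 := by exact_mod_cast hβ.ne'
  have hint : Integrable (fun x : ℝ ↦ (-2*(β:ℂ)*x + a) * gq β a x) := by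
    have heq : (fun x : ℝ ↦ (-2*(β:ℂ)*x + a) * gq β a x)
        = fun x : ℝ ↦ (-2*(β:ℂ)) * ((x:ℂ) * gq β a x) + a * gq β a x := by
      funext x; ring
    rw [heq]
    exact ((xgq_integrable hβ a).const_mul _).add ((gq_integrable hβ a).const_mul a)
  have hzero : ∫ x : ℝ, ((-2*(β:ℂ)*x + a) * gq β a x) = 0 :=
    integral_eq_zero_of_hasDerivAt_of_integrable (fun x ↦ gq_hasDerivAt a x) hint
      (gq_integrable hβ a)
  have hsplit : ∫ x : ℝ, ((-2*(β:ℂ)*x + a) * gq β a x)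
      = (-2*(β:ℂ)) * (∫ x : ℝ, (x:ℂ) * gq β a x) + a * ∫ x : ℝ, gq β a x := by
    rw [show (fun x : ℝ ↦ (-2*(β:ℂ)*x + a) * gq β a x)
        = fun x : ℝ ↦ (-2*(β:ℂ)) * ((x:ℂ) * gq β a x) + a * gq β a x from funext fun x ↦ by ring]
    rw [integral_add (((xgq_integrable hβ a).const_mul _)) ((gq_integrable hβ a).const_mul a),
      ]
    simp only [← smul_eq_mul, integral_smul]
  rw [hsplit, gq_integral hβ a] at hzero
  have h2β : (2*(β:ℂ)) ≠ 0 := by simp [hβ']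
  field_simp
  rw [show (β:ℂ) * 4 = 4 * β by ring]
  linear_combination (-(1:ℂ)) * hzero

lemma exp_val_pi {a : ℂ} (h : a^2/(4*(π:ℂ)) = ((3*π/4 : ℝ):ℂ) + π*Complex.I) :
    Complex.exp (a^2/(4*(π:ℂ))) = -((Real.exp (3*π/4) : ℝ):ℂ) := by
  rw [h, Complex.exp_add, Complex.exp_pi_mul_I, ← Complex.ofReal_exp]
  ring

lemma exp_val_pi' {a : ℂ} (h : a^2/(4*(π:ℂ)) = ((3*π/4 : ℝ):ℂ) - π*Complex.I) :
    Complex.exp (a^2/(4*(π:ℂ))) = -((Real.exp (3*π/4) : ℝ):ℂ) := by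
  rw [h, sub_eq_add_neg, Complex.exp_add, Complex.exp_neg, Complex.exp_pi_mul_I,
    ← Complex.ofReal_exp]
  simp [inv_neg]

theorem stmt7' :
      (∫ s in Set.Ioi (0 : ℝ),
        s / π ^ 2 * Real.sinh (2 * π * s) * Real.cos (π * s) * Real.exp (-s ^ 2 * π)) < 0 := by
  have hπ : (0:ℝ) < π := Real.pi_pos
  have hpi : ((π:ℝ):ℂ) ≠ 0 := by exact_mod_cast Real.pi_ne_zero
  set F : ℝ → ℝ := fun s ↦ s / π ^ 2 * Real.sinh (2 * π * s) * Real.cos (π * s)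
      * Real.exp (-s ^ 2 * π) with hF
  set a1 : ℂ := 2*π + π*Complex.I with ha1
  set a2 : ℂ := 2*π - π*Complex.I with ha2
  set a3 : ℂ := -2*π + π*Complex.I with ha3
  set a4 : ℂ := -2*π - π*Complex.I with ha4
  have heven : ∀ x : ℝ, F |x| = F x := by
    intro x
    rcases le_or_gt 0 x with h | h
    · rw [_root_.abs_of_nonneg h]
    · rw [_root_.abs_of_neg h, hF]
      simp only
      rw [show 2*π*(-x) = -(2*π*x) by ring, show π*(-x) = -(π*x) by ring,
        Real.sinh_neg, Real.cos_neg, neg_sq]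
      ring
  have habs : (∫ x : ℝ, F x) = 2 * ∫ x in Set.Ioi (0:ℝ), F x := by
    rw [← integral_comp_abs (f := F)]
    simp_rw [heven]
  have hpt : ∀ s : ℝ, ((F s : ℝ) : ℂ) = (1/(4*(π:ℂ)^2)) *
      ((s:ℂ) * gq π a1 s + (s:ℂ) * gq π a2 s - (s:ℂ) * gq π a3 s - (s:ℂ) * gq π a4 s) := by
    intro s
    rw [hF, ha1, ha2, ha3, ha4]
    simp only [gq]
    push_cast
    rw [show Complex.sinh (2*(π:ℂ)*s) =
        (Complex.exp (2*(π:ℂ)*s) - Complex.exp (-(2*(π:ℂ)*s)))/2 from rfl,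
      show Complex.cos ((π:ℂ)*s) =
        (Complex.exp ((π:ℂ)*s*Complex.I) + Complex.exp (-((π:ℂ)*s)*Complex.I))/2 from rfl]
    have h1 : Complex.exp (-(π:ℂ) * s ^ 2 + (2*π + π*Complex.I) * s)
        = Complex.exp (2*(π:ℂ)*s) * Complex.exp ((π:ℂ)*s*Complex.I)
          * Complex.exp (-(s:ℂ)^2*π) := by
      rw [← Complex.exp_add, ← Complex.exp_add]; congr 1; ring
    have h2 : Complex.exp (-(π:ℂ) * s ^ 2 + (2*π - π*Complex.I) * s)
        = Complex.exp (2*(π:ℂ)*s) * Complex.exp (-((π:ℂ)*s)*Complex.I)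
          * Complex.exp (-(s:ℂ)^2*π) := by
      rw [← Complex.exp_add, ← Complex.exp_add]; congr 1; ring
    have h3 : Complex.exp (-(π:ℂ) * s ^ 2 + (-2*π + π*Complex.I) * s)
        = Complex.exp (-(2*(π:ℂ)*s)) * Complex.exp ((π:ℂ)*s*Complex.I)
          * Complex.exp (-(s:ℂ)^2*π) := by
      rw [← Complex.exp_add, ← Complex.exp_add]; congr 1; ring
    have h4 : Complex.exp (-(π:ℂ) * s ^ 2 + (-2*π - π*Complex.I) * s)
        = Complex.exp (-(2*(π:ℂ)*s)) * Complex.exp (-((π:ℂ)*s)*Complex.I)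
          * Complex.exp (-(s:ℂ)^2*π) := by
      rw [← Complex.exp_add, ← Complex.exp_add]; congr 1; ring
    rw [h1, h2, h3, h4]
    field_simp
    ring
  -- complex integral value
  have hC : (∫ x : ℝ, ((F x : ℝ):ℂ)) = ((-Real.exp (3*π/4) / π^2 : ℝ) : ℂ) := by
    calc (∫ x : ℝ, ((F x : ℝ):ℂ))
        = ∫ x : ℝ, (1/(4*(π:ℂ)^2)) *
            ((x:ℂ) * gq π a1 x + (x:ℂ) * gq π a2 x - (x:ℂ) * gq π a3 x - (x:ℂ) * gq π a4 x) := by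
          exact integral_congr_ae (Filter.Eventually.of_forall hpt)
      _ = (1/(4*(π:ℂ)^2)) *
            ((∫ x : ℝ, (x:ℂ) * gq π a1 x) + (∫ x : ℝ, (x:ℂ) * gq π a2 x)
              - (∫ x : ℝ, (x:ℂ) * gq π a3 x) - ∫ x : ℝ, (x:ℂ) * gq π a4 x) := by
          rw [integral_const_mul]
          congr 1
          have i12 : Integrable (fun x : ℝ ↦ (x:ℂ) * gq π a1 x + (x:ℂ) * gq π a2 x) := by
            exact (xgq_integrable hπ a1).add (xgq_integrable hπ a2)
          have i123 : Integrable
              (fun x : ℝ ↦ (x:ℂ) * gq π a1 x + (x:ℂ) * gq π a2 x - (x:ℂ) * gq π a3 x) := by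
            exact i12.sub (xgq_integrable hπ a3)
          simp only [integral_sub i123 (xgq_integrable hπ a4),
            integral_sub i12 (xgq_integrable hπ a3),
            integral_add (xgq_integrable hπ a1) (xgq_integrable hπ a2)]
      _ = ((-Real.exp (3*π/4) / π^2 : ℝ) : ℂ) := by
          rw [xgq_integral hπ a1, xgq_integral hπ a2, xgq_integral hπ a3, xgq_integral hπ a4]
          have hbase : ((π:ℝ):ℂ) / ((π:ℝ):ℂ) = 1 := div_self hpi
          rw [hbase, Complex.one_cpow]
          have hv1 : Complex.exp (a1^2/(4*(π:ℂ))) = -((Real.exp (3*π/4) : ℝ):ℂ) := by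
            apply exp_val_pi
            rw [ha1]; push_cast
            field_simp
            linear_combination Complex.I_sq
          have hv2 : Complex.exp (a2^2/(4*(π:ℂ))) = -((Real.exp (3*π/4) : ℝ):ℂ) := by
            apply exp_val_pi'
            rw [ha2]; push_cast
            field_simp
            linear_combination Complex.I_sq
          have hv3 : Complex.exp (a3^2/(4*(π:ℂ))) = -((Real.exp (3*π/4) : ℝ):ℂ) := by
            apply exp_val_pi'
            rw [ha3]; push_cast
            field_simp
            linear_combination Complex.I_sq
          have hv4 : Complex.exp (a4^2/(4*(π:ℂ))) = -((Real.exp (3*π/4) : ℝ):ℂ) := by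
            apply exp_val_pi
            rw [ha4]; push_cast
            field_simp
            linear_combination Complex.I_sq
          rw [hv1, hv2, hv3, hv4, ha1, ha2, ha3, ha4]
          have h6 : (π:ℂ)^6 * ((π:ℂ)⁻¹)^6 = 1 := by
            rw [← mul_pow, mul_inv_cancel₀ hpi, one_pow]
          push_cast
          field_simp
          linear_combination
  have hC2 : (∫ x : ℝ, ((F x : ℝ):ℂ)) = ((∫ x : ℝ, F x : ℝ) : ℂ) := integral_ofReal
  have hval : (∫ x : ℝ, F x) = -Real.exp (3*π/4) / π^2 := by
    rw [hC2] at hC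
    exact_mod_cast hC
  have hIoi : (∫ x in Set.Ioi (0:ℝ), F x) = (-Real.exp (3*π/4) / π^2) / 2 := by
    rw [hval] at habs; linarith
  rw [show (∫ s in Set.Ioi (0 : ℝ),
      s / π ^ 2 * Real.sinh (2 * π * s) * Real.cos (π * s) * Real.exp (-s ^ 2 * π))
      = ∫ x in Set.Ioi (0:ℝ), F x from rfl, hIoi]
  have : (0:ℝ) < Real.exp (3*π/4) := Real.exp_pos _
  have hπ2 : (0:ℝ) < π^2 := by positivity
  have : -Real.exp (3*π/4) / π^2 < 0 := div_neg_of_neg_of_pos (by linarith) hπ2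
  linarith


/-- The trumpet partition function density
`∫_0^∞ ds (s/π²) sinh(2πs) cos(bs) e^{-s²β}` is not everywhere nonnegative:
there exist `b > 0` and `β > 0` for which it is strictly negative. -/
theorem stmt7 :
    ∃ b : ℝ, 0 < b ∧ ∃ β : ℝ, 0 < β ∧
      (∫ s in Set.Ioi (0 : ℝ),
        s / π ^ 2 * Real.sinh (2 * π * s) * Real.cos (b * s) * Real.exp (-s ^ 2 * β)) < 0 :=
  ⟨π, Real.pi_pos, π, Real.pi_pos, stmt7'⟩
end
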